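/- Let F(x) = ₂F₁(a,b;c;x) with a,b,c > 0. If ab/(a+b+1) < c, then log F is convex on (0,1); in particular F((x+y)/2) ≤ √(F(x)F(y)) for all x,y ∈ (0,1), with equality iff x = y. -/

import Mathlib

/-!
With `dₙ = (a)ₙ(b)ₙ/(c)ₙ` we have `F(x) = Σ dₙ xⁿ/n!`, an exponential generating function, so
`F'` and `F''` are the exponential generating functions of the shifted sequences `dₙ₊₁`, `dₙ₊₂`.
By the Cauchy product,
`F F'' - F'² = Σₘ xᵐ Σ_{j+k=m} (d_j d_{k+2} - d_{j+1} d_{k+1}) / (j! k!)`,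
and after symmetrising in `j, k` every inner term is nonnegative as soon as `(dₙ)` is log-convex
(by AM-GM), while the `m = 0` term is `d₀d₂ - d₁² > 0`. The ratio `dₙ₊₁/dₙ = (a+n)(b+n)/(c+n)` is
strictly increasing because `ab < c(a+b+1)`, which makes `(dₙ)` strictly log-convex. Hence
`(log F)'' = (F F'' - F'²)/F² > 0` on `(0,1)`, and the midpoint inequality together with its
equality case is strict convexity of `log F` at the weights `1/2, 1/2`.
-/

open Filter Finset Set Topology
open scoped Nat

/-- The rising factorial (Pochhammer symbol) `(a)ₙ = a(a+1)⋯(a+n−1)`. -/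
def ascFac (a : ℝ) : ℕ → ℝ
  | 0 => 1
  | n + 1 => ascFac a n * (a + n)

/-- The Gaussian hypergeometric function `₂F₁(a,b;c;x) = Σ (a)ₙ(b)ₙ/((c)ₙ n!) xⁿ`. -/
noncomputable def hyperF (a b c x : ℝ) : ℝ :=
  ∑' n : ℕ, ascFac a n * ascFac b n / (ascFac c n * n.factorial) * x ^ n

theorem ascFac_pos {a : ℝ} (ha : 0 < a) (n : ℕ) : 0 < ascFac a n := by
  induction n with
  | zero => simp [ascFac]
  | succ n ih => rw [ascFac]; positivity

theorem tendsto_add_div_add_atTop (a b : ℝ) :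
    Tendsto (fun n : ℕ => (a + n) / (b + n)) atTop (𝓝 1) := by
  simpa using tendsto_add_mul_div_add_mul_atTop_nhds a b 1 one_ne_zero

theorem sum_antidiagonal_nonneg_of_add_swap {f : ℕ × ℕ → ℝ}
    (hf : ∀ j k, 0 ≤ f (j, k) + f (k, j)) (m : ℕ) : 0 ≤ ∑ kl ∈ antidiagonal m, f kl := by
  have h2 : 2 * ∑ kl ∈ antidiagonal m, f kl = ∑ kl ∈ antidiagonal m, (f kl + f kl.swap) := by
    rw [sum_add_distrib, Nat.sum_antidiagonal_swap (f := f)]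
    ring
  have : 0 ≤ ∑ kl ∈ antidiagonal m, (f kl + f kl.swap) :=
    sum_nonneg fun kl _ => hf kl.1 kl.2
  linarith

theorem two_mul_mul_le_add_of_sq_le_mul {d : ℕ → ℝ} (hd : ∀ n, 0 < d n)
    (hlc : ∀ n, d (n + 1) ^ 2 ≤ d n * d (n + 2)) (j k : ℕ) :
    2 * (d (j + 1) * d (k + 1)) ≤ d j * d (k + 2) + d k * d (j + 2) := by
  have hsq : (d (j + 1) * d (k + 1)) ^ 2 ≤ (d j * d (k + 2)) * (d k * d (j + 2)) := by
    calc (d (j + 1) * d (k + 1)) ^ 2 = d (j + 1) ^ 2 * d (k + 1) ^ 2 := by ring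
      _ ≤ (d j * d (j + 2)) * (d k * d (k + 2)) :=
          mul_le_mul (hlc j) (hlc k) (sq_nonneg _) (mul_pos (hd j) (hd (j + 2))).le
      _ = (d j * d (k + 2)) * (d k * d (j + 2)) := by ring
  nlinarith [sq_nonneg (d j * d (k + 2) - d k * d (j + 2)), mul_pos (hd j) (hd (k + 2)),
    mul_pos (hd k) (hd (j + 2)), mul_pos (hd (j + 1)) (hd (k + 1))]

theorem StrictConvexOn.lt_sqrt_mul_of_log {s : Set ℝ} {F : ℝ → ℝ}
    (h : StrictConvexOn ℝ s fun x => Real.log (F x)) (hF : ∀ x ∈ s, 0 < F x)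
    {x y : ℝ} (hx : x ∈ s) (hy : y ∈ s) (hxy : x ≠ y) : F ((x + y) / 2) < √(F x * F y) := by
  have hmid : (x + y) / 2 = (1 / 2 : ℝ) • x + (1 / 2 : ℝ) • y := by
    simp only [smul_eq_mul]
    ring
  have hm : (x + y) / 2 ∈ s := hmid ▸ h.1 hx hy (by norm_num) (by norm_num) (by norm_num)
  have hlt := h.2 hx hy hxy (by norm_num : (0 : ℝ) < 1 / 2) (by norm_num : (0 : ℝ) < 1 / 2)
    (by norm_num)
  rw [← hmid, smul_eq_mul, smul_eq_mul] at hlt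
  have hxy' := mul_pos (hF x hx) (hF y hy)
  rw [← Real.log_lt_log_iff (hF _ hm) (Real.sqrt_pos.2 hxy'), Real.log_sqrt hxy'.le,
    Real.log_mul (hF x hx).ne' (hF y hy).ne']
  linarith

noncomputable def egf (d : ℕ → ℝ) (x : ℝ) : ℝ := ∑' n, d n / n ! * x ^ n

theorem hasSum_egf_mul_egf {p q : ℕ → ℝ} {x : ℝ} (hp : Summable fun n => ‖p n / n ! * x ^ n‖)
    (hq : Summable fun n => ‖q n / n ! * x ^ n‖) :
    HasSum (fun m => (∑ kl ∈ antidiagonal m, p kl.1 / kl.1 ! * (q kl.2 / kl.2 !)) * x ^ m)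
      (egf p x * egf q x) := by
  have hterm : ∀ m, (∑ kl ∈ antidiagonal m, p kl.1 / kl.1 ! * (q kl.2 / kl.2 !)) * x ^ m =
      ∑ kl ∈ antidiagonal m, p kl.1 / kl.1 ! * x ^ kl.1 * (q kl.2 / kl.2 ! * x ^ kl.2) := by
    intro m
    rw [sum_mul]
    refine sum_congr rfl fun kl hkl => ?_
    rw [← mem_antidiagonal.1 hkl, pow_add]
    ring
  simp_rw [hterm]
  rw [egf, egf, tsum_mul_tsum_eq_tsum_sum_antidiagonal_of_summable_norm hp hq]
  exact (summable_norm_sum_mul_antidiagonal_of_summable_norm hp hq).of_norm.hasSum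

section RatioTendstoOne

variable {d : ℕ → ℝ} {x : ℝ} (hd : ∀ n, 0 < d n)
  (hlim : Tendsto (fun n : ℕ => d (n + 1) / ((n + 1) * d n)) atTop (𝓝 1))
include hd hlim

theorem summable_norm_egf_term (hx : |x| < 1) :
    Summable fun n => ‖d n / n ! * x ^ n‖ := by
  rcases eq_or_ne x 0 with rfl | hx0
  · exact (hasSum_single 0 fun n hn => by simp [hn]).summable
  refine summable_of_ratio_test_tendsto_lt_one hx
    (Eventually.of_forall fun n => by simp [hx0, (hd n).ne', Nat.factorial_ne_zero]) ?_
  have hr : Tendsto (fun n : ℕ => d (n + 1) / ((n + 1) * d n) * |x|) atTop (𝓝 |x|) := by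
    simpa using hlim.mul_const |x|
  refine hr.congr fun n => ?_
  have := hd n
  simp only [abs_abs, norm_mul, norm_div, norm_pow, Real.norm_eq_abs, abs_of_pos (hd _),
    Nat.abs_cast, Nat.factorial_succ, Nat.cast_mul, pow_succ]
  field_simp
  push_cast
  ring

theorem tendsto_ratio_succ :
    Tendsto (fun n : ℕ => d (n + 1 + 1) / ((n + 1) * d (n + 1))) atTop (𝓝 1) := by
  have := ((hlim.comp (tendsto_add_atTop_nat 1)).mul (tendsto_add_div_add_atTop 2 1))
  rw [mul_one] at this
  refine this.congr fun n => ?_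
  have := hd (n + 1)
  simp only [Function.comp_apply]
  push_cast
  field_simp
  ring

theorem hasDerivAt_egf (hx : |x| < 1) :
    HasDerivAt (egf d) (egf (fun n => d (n + 1)) x) x := by
  obtain ⟨r, hxr, hr1⟩ := exists_between hx
  have hr0 : 0 < r := (abs_nonneg x).trans_lt hxr
  set u : ℕ → ℝ := fun n => d n / n ! * (n * r ^ (n - 1))
  have hu : Summable u := by
    rw [← summable_nat_add_iff 1]
    refine (summable_norm_egf_term (fun n => hd (n + 1)) (tendsto_ratio_succ hd hlim)
      (by rwa [abs_of_pos hr0])).congr fun n => ?_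
    simp only [u, Real.norm_eq_abs, abs_mul, abs_div, abs_of_pos (hd _), abs_of_pos hr0,
      abs_pow, Nat.abs_cast, Nat.factorial_succ, Nat.add_sub_cancel]
    push_cast
    field_simp
  have hbound : ∀ n, ∀ y ∈ Ioo (-r) r, ‖d n / n ! * (n * y ^ (n - 1))‖ ≤ u n := by
    intro n y hy
    have hyr : |y| ≤ r := (abs_lt.2 hy).le
    have := hd n
    simp only [u, Real.norm_eq_abs, abs_mul, abs_div, abs_of_pos (hd _), abs_pow, Nat.abs_cast]
    gcongr
  have hx' : x ∈ Ioo (-r) r := abs_lt.1 hxr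
  have hderiv := hasDerivAt_tsum_of_isPreconnected hu isOpen_Ioo isPreconnected_Ioo
    (g := fun n t => d n / n ! * t ^ n) (g' := fun n y => d n / n ! * (n * y ^ (n - 1)))
    (fun n y _ => (hasDerivAt_pow n y).const_mul _) hbound hx'
    (summable_norm_egf_term hd hlim hx).of_norm hx'
  refine hderiv.congr_deriv ?_
  rw [(Summable.of_norm_bounded hu fun n => hbound n x hx').tsum_eq_zero_add]
  simp only [egf, Nat.cast_zero, zero_mul, mul_zero, zero_add, Nat.add_sub_cancel]
  refine tsum_congr fun n => ?_
  rw [Nat.factorial_succ]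
  push_cast
  field_simp

theorem egf_pos (hx0 : 0 ≤ x) (hx1 : x < 1) : 0 < egf d x := by
  refine (summable_norm_egf_term hd hlim (by rwa [abs_of_nonneg hx0])).of_norm.tsum_pos
    (fun n => ?_) 0 (by simpa using hd 0)
  have := hd n
  positivity

end RatioTendstoOne

section LogConvex

variable {d : ℕ → ℝ} (hd : ∀ n, 0 < d n)
  (hlim : Tendsto (fun n : ℕ => d (n + 1) / ((n + 1) * d n)) atTop (𝓝 1))
  (hlc : ∀ n, d (n + 1) ^ 2 ≤ d n * d (n + 2)) (hlc0 : d 1 ^ 2 < d 0 * d 2)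
include hd hlim hlc hlc0

theorem egf_mul_egf_sub_sq_pos {x : ℝ} (hx0 : 0 ≤ x) (hx1 : x < 1) :
    0 < egf d x * egf (fun n => d (n + 2)) x - egf (fun n => d (n + 1)) x ^ 2 := by
  have hx : |x| < 1 := by rwa [abs_of_nonneg hx0]
  have hlim1 := tendsto_ratio_succ hd hlim
  have s0 := summable_norm_egf_term hd hlim hx
  have s1 := summable_norm_egf_term (fun n => hd (n + 1)) hlim1 hx
  have s2 := summable_norm_egf_term (fun n => hd (n + 2))
    (tendsto_ratio_succ (fun n => hd (n + 1)) hlim1) hx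
  set γ : ℕ → ℝ := fun m => ∑ kl ∈ antidiagonal m,
    (d kl.1 * d (kl.2 + 2) - d (kl.1 + 1) * d (kl.2 + 1)) / (kl.1 ! * kl.2 !)
  have hγ : HasSum (fun m => γ m * x ^ m)
      (egf d x * egf (fun n => d (n + 2)) x - egf (fun n => d (n + 1)) x ^ 2) := by
    have hprod := (hasSum_egf_mul_egf s0 s2).sub (hasSum_egf_mul_egf s1 s1)
    rw [sq]
    refine hprod.congr_fun fun m => ?_
    rw [← sub_mul, ← sum_sub_distrib]
    congr 1
    refine sum_congr rfl fun kl _ => ?_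
    field_simp
  rw [← hγ.tsum_eq]
  refine hγ.summable.tsum_pos (fun m => mul_nonneg ?_ (pow_nonneg hx0 m)) 0 ?_
  · refine sum_antidiagonal_nonneg_of_add_swap (fun j k => ?_) m
    rw [mul_comm (k ! : ℝ), ← add_div]
    have := two_mul_mul_le_add_of_sq_le_mul hd hlc j k
    exact div_nonneg (by linarith) (by positivity)
  · simp [γ]
    linarith

theorem strictConvexOn_log_egf : StrictConvexOn ℝ (Ioo 0 1) fun x => Real.log (egf d x) := by
  have hpos : ∀ x ∈ Ioo (0 : ℝ) 1, 0 < egf d x := fun x hx => egf_pos hd hlim hx.1.le hx.2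
  have habs : ∀ x ∈ Ioo (0 : ℝ) 1, |x| < 1 := fun x hx => abs_lt.2 ⟨by linarith [hx.1], hx.2⟩
  have hF : ∀ x ∈ Ioo (0 : ℝ) 1, HasDerivAt (egf d) (egf (fun n => d (n + 1)) x) x :=
    fun x hx => hasDerivAt_egf hd hlim (habs x hx)
  have hF' : ∀ x ∈ Ioo (0 : ℝ) 1,
      HasDerivAt (egf fun n => d (n + 1)) (egf (fun n => d (n + 2)) x) x :=
    fun x hx => hasDerivAt_egf (fun n => hd (n + 1)) (tendsto_ratio_succ hd hlim) (habs x hx)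
  have hlog : ∀ x ∈ Ioo (0 : ℝ) 1, HasDerivAt (fun x => Real.log (egf d x))
      (egf (fun n => d (n + 1)) x / egf d x) x :=
    fun x hx => (hF x hx).log (hpos x hx).ne'
  refine strictConvexOn_of_deriv2_pos (convex_Ioo 0 1)
    (fun x hx => (hlog x hx).continuousAt.continuousWithinAt) fun x hx => ?_
  rw [interior_Ioo] at hx
  have hderiv : deriv (fun x => Real.log (egf d x)) =ᶠ[𝓝 x]
      fun y => egf (fun n => d (n + 1)) y / egf d y := by
    filter_upwards [isOpen_Ioo.mem_nhds hx] with y hy using (hlog y hy).deriv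
  rw [Function.iterate_succ_apply, Function.iterate_one, hderiv.deriv_eq,
    ((hF' x hx).fun_div (hF x hx) (hpos x hx).ne').deriv]
  have := egf_mul_egf_sub_sq_pos hd hlim hlc hlc0 hx.1.le hx.2
  exact div_pos (by linear_combination this) (pow_pos (hpos x hx) 2)

end LogConvex

noncomputable def hyperCoeff (a b c : ℝ) (n : ℕ) : ℝ := ascFac a n * ascFac b n / ascFac c n

section Hypergeometric

variable {a b c : ℝ}

theorem hyperF_eq_egf : hyperF a b c = egf (hyperCoeff a b c) := by
  funext x
  simp only [hyperF, egf, hyperCoeff, div_div]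

theorem hyperCoeff_pos (ha : 0 < a) (hb : 0 < b) (hc : 0 < c) (n : ℕ) :
    0 < hyperCoeff a b c n := by
  have := ascFac_pos ha n; have := ascFac_pos hb n; have := ascFac_pos hc n
  unfold hyperCoeff
  positivity

theorem hyperCoeff_succ (hc : 0 < c) (n : ℕ) :
    hyperCoeff a b c (n + 1) = hyperCoeff a b c n * ((a + n) * (b + n) / (c + n)) := by
  have := ascFac_pos hc n
  simp only [hyperCoeff, ascFac]
  field_simp

theorem tendsto_hyperCoeff_ratio (ha : 0 < a) (hb : 0 < b) (hc : 0 < c) :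
    Tendsto (fun n : ℕ => hyperCoeff a b c (n + 1) / ((n + 1) * hyperCoeff a b c n)) atTop
      (𝓝 1) := by
  have := (tendsto_add_div_add_atTop a c).mul (tendsto_add_div_add_atTop b 1)
  rw [mul_one] at this
  refine this.congr fun n => ?_
  have := hyperCoeff_pos ha hb hc n
  rw [hyperCoeff_succ hc]
  field_simp
  ring

theorem hyperCoeff_sq_lt_mul (ha : 0 < a) (hb : 0 < b) (hc : 0 < c) (h : a * b < c * (a + b + 1))
    (n : ℕ) : hyperCoeff a b c (n + 1) ^ 2 < hyperCoeff a b c n * hyperCoeff a b c (n + 2) := by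
  set R : ℕ → ℝ := fun n => (a + n) * (b + n) / (c + n)
  have hR : R n < R (n + 1) := by
    simp only [R]
    rw [div_lt_div_iff₀ (by positivity) (by positivity)]
    push_cast
    have hn : (0 : ℝ) ≤ n := n.cast_nonneg
    nlinarith [mul_nonneg hc.le hn]
  have hpos := hyperCoeff_pos ha hb hc n
  have hRpos : 0 < R n := by positivity
  rw [hyperCoeff_succ hc (n + 1), hyperCoeff_succ hc n]
  calc (hyperCoeff a b c n * R n) ^ 2 = hyperCoeff a b c n ^ 2 * R n * R n := by ring
    _ < hyperCoeff a b c n ^ 2 * R n * R (n + 1) := by gcongr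
    _ = _ := by simp only [R]; push_cast; ring

end Hypergeometric

theorem stmt10 (a b c : ℝ) (ha : 0 < a) (hb : 0 < b) (hc : 0 < c)
    (h : a * b / (a + b + 1) < c) :
    ConvexOn ℝ (Set.Ioo 0 1) (fun x => Real.log (hyperF a b c x)) ∧
      ∀ x ∈ Set.Ioo (0:ℝ) 1, ∀ y ∈ Set.Ioo (0:ℝ) 1,
        hyperF a b c ((x + y) / 2) ≤ Real.sqrt (hyperF a b c x * hyperF a b c y) ∧
          (hyperF a b c ((x + y) / 2) = Real.sqrt (hyperF a b c x * hyperF a b c y)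
            ↔ x = y) := by
  have hab : a * b < c * (a + b + 1) := by rwa [div_lt_iff₀ (by positivity)] at h
  have hd := hyperCoeff_pos ha hb hc
  have hlim := tendsto_hyperCoeff_ratio ha hb hc
  have hconv := strictConvexOn_log_egf hd hlim (fun n => (hyperCoeff_sq_lt_mul ha hb hc hab n).le)
    (hyperCoeff_sq_lt_mul ha hb hc hab 0)
  have hpos : ∀ x ∈ Ioo (0 : ℝ) 1, 0 < egf (hyperCoeff a b c) x :=
    fun x hx => egf_pos hd hlim hx.1.le hx.2
  rw [hyperF_eq_egf]
  refine ⟨hconv.convexOn, fun x hx y hy => ?_⟩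
  rcases eq_or_ne x y with rfl | hxy
  · simp [add_self_div_two, Real.sqrt_mul_self (hpos x hx).le]
  · have hlt := hconv.lt_sqrt_mul_of_log hpos hx hy hxy
    exact ⟨hlt.le, iff_of_false hlt.ne hxy⟩
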